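/- For every 2-form ω = Σ_{i<j} ω_{ij} e_i∧e_j on ℝ⁷, the Clifford action satisfies σ(ω)ψ₁ = 0 if and only if the following seven linear equations hold: ω₁₂+ω₃₄+ω₅₆ = 0, −ω₁₃+ω₂₄−ω₆₇ = 0, −ω₁₄−ω₂₃−ω₅₇ = 0, −ω₁₆−ω₂₅+ω₃₇ = 0, ω₁₅−ω₂₆−ω₄₇ = 0, ω₁₇+ω₃₆+ω₄₅ = 0, ω₂₇+ω₃₅−ω₄₆ = 0. (These equations define the Lie algebra g₂ inside spin(7).) -/

import Mathlib

open Matrix BigOperators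

noncomputable section

abbrev M8 : Type := Matrix (Fin 8) (Fin 8) ℝ

/-- 2-forms on ℝ⁷ -/
abbrev Lam2 : Type := AlternatingMap ℝ (Fin 7 → ℝ) ℝ (Fin 2)

/-- 3-forms on ℝ⁷ -/
abbrev Lam3 : Type := AlternatingMap ℝ (Fin 7 → ℝ) ℝ (Fin 3)

/-- standard basis of ℝ⁷ -/
def u (i : Fin 7) : Fin 7 → ℝ := Pi.single i 1

/-- standard spinor basis ψ₁,…,ψ₈ (0-indexed) -/
def ψ (k : Fin 8) : Fin 8 → ℝ := Pi.single k 1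

/-- E_{ij} : ψ_i ↦ ψ_j, ψ_j ↦ -ψ_i -/
def EE (i j : Fin 8) : M8 := Matrix.single j i 1 - Matrix.single i j 1

/-- Clifford multiplication by e₁,…,e₇ (0-indexed) -/
def e : Fin 7 → M8 :=
  ![EE 0 7 + EE 1 6 - EE 2 5 - EE 3 4,
    -EE 0 6 + EE 1 7 + EE 2 4 - EE 3 5,
    -EE 0 5 + EE 1 4 - EE 2 7 + EE 3 6,
    -EE 0 4 - EE 1 5 - EE 2 6 - EE 3 7,
    -EE 0 2 - EE 1 3 + EE 4 6 + EE 5 7,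
    EE 0 3 - EE 1 2 - EE 4 7 + EE 5 6,
    EE 0 1 - EE 2 3 - EE 4 5 + EE 6 7]

def pick2 (i j : Fin 7) : (Fin 7 → ℝ) →ₗ[ℝ] (Fin 2 → ℝ) :=
  LinearMap.pi fun m => LinearMap.proj (![i, j] m)

def pick3 (i j k : Fin 7) : (Fin 7 → ℝ) →ₗ[ℝ] (Fin 3 → ℝ) :=
  LinearMap.pi fun m => LinearMap.proj (![i, j, k] m)

/-- the 2-form e_i ∧ e_j -/
def w2 (i j : Fin 7) : Lam2 :=
  (Matrix.detRowAlternating : AlternatingMap ℝ (Fin 2 → ℝ) ℝ (Fin 2)).compLinearMap (pick2 i j)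

/-- the 3-form e_i ∧ e_j ∧ e_k -/
def w3 (i j k : Fin 7) : Lam3 :=
  (Matrix.detRowAlternating : AlternatingMap ℝ (Fin 3 → ℝ) ℝ (Fin 3)).compLinearMap (pick3 i j k)

/-- Clifford action of a 2-form -/
def σ2 (ω : Lam2) : M8 :=
  ∑ i : Fin 7, ∑ j : Fin 7, if i < j then ω ![u i, u j] • (e i * e j) else 0

/-- Clifford action of a 3-form -/
def σ3 (T : Lam3) : M8 :=
  ∑ i : Fin 7, ∑ j : Fin 7, ∑ k : Fin 7,
    if i < j ∧ j < k then T ![u i, u j, u k] • (e i * e j * e k) else 0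

/-- the skew-symmetric 7×7 matrix A_ω associated to a 2-form ω -/
def A2 (ω : Lam2) : Matrix (Fin 7) (Fin 7) ℝ :=
  ∑ i : Fin 7, ∑ j : Fin 7,
    if i < j then ω ![u i, u j] •
      (Matrix.single j i (1 : ℝ) - Matrix.single i j 1) else 0

/-- T is ω-invariant: the natural action of the 2-form ω on the 3-form T vanishes -/
def inv3 (ω : Lam2) (T : Lam3) : Prop :=
  ∀ X Y Z : Fin 7 → ℝ,
    T ![A2 ω *ᵥ X, Y, Z] + T ![X, A2 ω *ᵥ Y, Z] + T ![X, Y, A2 ω *ᵥ Z] = 0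

/-- the standard G₂ 3-form φ = e₁₂₇+e₁₃₅−e₁₄₆−e₂₃₆−e₂₄₅+e₃₄₇+e₅₆₇ -/
def φf : Lam3 :=
  w3 0 1 6 + w3 0 2 4 - w3 0 3 5 - w3 1 2 5 - w3 1 3 4 + w3 2 3 6 + w3 4 5 6

/-! Each generator sends ψ₁ to ± a basis spinor, so σ(ω)ψ₁ can be computed in coordinates: its
ψ₁-component vanishes and its ψ₂,…,ψ₈-components are, in this order, the left-hand sides of the
seven equations. -/

lemma EE_mulVec (a b : Fin 8) (x : Fin 8 → ℝ) : EE a b *ᵥ x = x a • ψ b - x b • ψ a := by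
  ext m
  by_cases ha : m = a <;> by_cases hb : m = b <;>
    simp [EE, sub_mulVec, single_mulVec, ψ, Function.update_apply, Pi.single_apply, ha, hb]

lemma e_mulVec_ψ_zero (k : Fin 7) :
    e k *ᵥ ψ 0 = ![ψ 7, -ψ 6, -ψ 5, -ψ 4, -ψ 2, ψ 3, ψ 1] k := by
  fin_cases k <;>
    simp only [e, Fin.zero_eta, Fin.mk_one, Fin.reduceFinMk, Matrix.cons_val, add_mulVec,
      sub_mulVec, neg_mulVec, EE_mulVec] <;>
    ext m <;> fin_cases m <;> simp [ψ]

lemma σ2_mulVec (ω : Lam2) (x : Fin 8 → ℝ) :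
    σ2 ω *ᵥ x = ∑ i, ∑ j, if i < j then ω ![u i, u j] • (e i *ᵥ (e j *ᵥ x)) else 0 := by
  simp only [σ2, sum_mulVec, apply_ite (· *ᵥ x), smul_mulVec, mulVec_mulVec, zero_mulVec]

lemma σ2_mulVec_ψ_zero (ω : Lam2) :
    σ2 ω *ᵥ ψ 0 = ![0,
      ω ![u 0, u 1] + ω ![u 2, u 3] + ω ![u 4, u 5],
      -ω ![u 0, u 2] + ω ![u 1, u 3] - ω ![u 5, u 6],
      -ω ![u 0, u 3] - ω ![u 1, u 2] - ω ![u 4, u 6],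
      -ω ![u 0, u 5] - ω ![u 1, u 4] + ω ![u 2, u 6],
      ω ![u 0, u 4] - ω ![u 1, u 5] - ω ![u 3, u 6],
      ω ![u 0, u 6] + ω ![u 2, u 5] + ω ![u 3, u 4],
      ω ![u 1, u 6] + ω ![u 2, u 4] - ω ![u 3, u 5]] := by
  simp only [σ2_mulVec, e_mulVec_ψ_zero, Fin.sum_univ_seven, Fin.isValue, Matrix.cons_val,
    Fin.reduceLT, if_true, if_false, add_zero, zero_add, mulVec_neg]
  simp only [e, Matrix.cons_val, add_mulVec, sub_mulVec, neg_mulVec, EE_mulVec]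
  ext m
  fin_cases m <;> simp [ψ] <;> ring

theorem stmt_0 (ω : Lam2) :
    σ2 ω *ᵥ ψ 0 = 0 ↔
      (ω ![u 0, u 1] + ω ![u 2, u 3] + ω ![u 4, u 5] = 0 ∧
       -ω ![u 0, u 2] + ω ![u 1, u 3] - ω ![u 5, u 6] = 0 ∧
       -ω ![u 0, u 3] - ω ![u 1, u 2] - ω ![u 4, u 6] = 0 ∧
       -ω ![u 0, u 5] - ω ![u 1, u 4] + ω ![u 2, u 6] = 0 ∧
       ω ![u 0, u 4] - ω ![u 1, u 5] - ω ![u 3, u 6] = 0 ∧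
       ω ![u 0, u 6] + ω ![u 2, u 5] + ω ![u 3, u 4] = 0 ∧
       ω ![u 1, u 6] + ω ![u 2, u 4] - ω ![u 3, u 5] = 0) := by
  rw [σ2_mulVec_ψ_zero]
  simp only [cons_eq_zero_iff, true_and, and_true, zero_empty]
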